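/- There is no transitive and reflexive Kripke model M (over propositional variables Y_r, r ∈ R, with the axiom that exactly one Y_r holds in each world) and world w such that M,w ⊨ □σ, where σ := ⋁_{d∈D} (⟨T=d⟩ ∧ ◇⟨T>d⟩). Equivalently, ¬□σ is valid in all transitive reflexive models satisfying (Ax_{=1}) in every world. -/

import Mathlib

/-- Propositional modal formulas over the variables `Y_r`, `r ∈ R = Fin 6`
(`0 = Mo, 1 = Tu, 2 = We, 3 = Th, 4 = Fr, 5 = none`). -/
inductive MForm : Type where
  | bot : MForm
  | var : Fin 6 → MForm
  | imp : MForm → MForm → MForm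
  | box : MForm → MForm
deriving DecidableEq

def MForm.neg (φ : MForm) : MForm := φ.imp .bot
def MForm.top : MForm := MForm.neg .bot
def MForm.or (φ ψ : MForm) : MForm := φ.neg.imp ψ
def MForm.and (φ ψ : MForm) : MForm := (φ.imp ψ.neg).neg
/-- `◇φ := ¬□¬φ`. -/
def MForm.dia (φ : MForm) : MForm := (φ.neg.box).neg

/-- A Kripke model with world set `W`: accessibility relation `E` and
valuation `val`. -/
structure Kripke (W : Type) where
  E : W → W → Prop
  val : W → Fin 6 → Prop

/-- Satisfaction `M, w ⊨ φ`. -/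
def MSat {W : Type} (M : Kripke W) : W → MForm → Prop
  | _, .bot => False
  | w, .var i => M.val w i
  | w, .imp φ ψ => MSat M w φ → MSat M w ψ
  | w, .box φ => ∀ w', M.E w w' → MSat M w' φ

def bigOrM (l : List MForm) : MForm := l.foldr MForm.or .bot

/-- `⟨T > d⟩ = ⋁_{r > d} Y_r`. -/
def TGtM (d : Fin 6) : MForm :=
  bigOrM (((List.finRange 6).filter (fun r => d < r)).map MForm.var)

/-- `σ := ⋁_{d ∈ D} (⟨T = d⟩ ∧ ◇⟨T > d⟩)`, the "surprising test" formula. -/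
def sigmaM : MForm :=
  bigOrM (((List.finRange 6).filter (fun d => d.val < 5)).map
    (fun d => (MForm.var d).and (MForm.dia (TGtM d))))

/-!
Under `□σ` every world `u` seen from `w` satisfies `σ`, so `u` sees a world whose run is strictly
later than the run of `u`, and by transitivity that world is again seen from `w`. Taking `u` with
the latest run among the worlds seen from `w` (one exists, since `w` sees itself and `R` is finite)
gives a contradiction.
-/

lemma Transitive.exists_forall_not_lt {W α : Type*} [Preorder α] [WellFoundedGT α]
    {E : W → W → Prop} (hE : Transitive E) (f : W → α) {w v : W} (hv : E w v) :
    ∃ u, E w u ∧ ∀ u', E u u' → ¬ f u < f u' := by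
  obtain ⟨_, ⟨u, hu, rfl⟩, hmax⟩ :=
    wellFounded_gt.has_min (f '' {u | E w u}) ⟨f v, v, hv, rfl⟩
  exact ⟨u, hu, fun u' hu' => hmax _ ⟨u', hE hu hu', rfl⟩⟩

section Semantics

variable {W : Type} (M : Kripke W) (v : W)

lemma MSat_bigOrM (l : List MForm) : MSat M v (bigOrM l) ↔ ∃ φ ∈ l, MSat M v φ := by
  induction l with
  | nil => simp [bigOrM, MSat]
  | cons φ l ih =>
    simp only [bigOrM, List.foldr_cons] at ih ⊢
    simp only [MForm.or, MForm.neg, MSat, ih, List.mem_cons, exists_eq_or_imp]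
    tauto

lemma MSat_and (φ ψ : MForm) : MSat M v (φ.and ψ) ↔ MSat M v φ ∧ MSat M v ψ := by
  simp only [MForm.and, MForm.neg, MSat]
  tauto

lemma MSat_dia (φ : MForm) : MSat M v φ.dia ↔ ∃ v', M.E v v' ∧ MSat M v' φ := by
  simp [MForm.dia, MForm.neg, MSat]

lemma MSat_TGtM (d : Fin 6) : MSat M v (TGtM d) ↔ ∃ r, d < r ∧ M.val v r := by
  simp [TGtM, MSat_bigOrM, MSat]

lemma MSat_sigmaM :
    MSat M v sigmaM ↔
      ∃ d : Fin 6, d.val < 5 ∧ M.val v d ∧ ∃ v', M.E v v' ∧ ∃ r, d < r ∧ M.val v' r := by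
  simp [sigmaM, MSat_bigOrM, MSat_and, MSat_dia, MSat_TGtM, MSat]

end Semantics

/-- No world of a transitive and reflexive Kripke model in which each world is
an `r`-world for exactly one run `r` (axiom `(Ax_{=1})` holds everywhere)
satisfies `□σ`; i.e. `¬□σ` is valid in all such models. -/
theorem stmt_16 {W : Type} (M : Kripke W) (ht : Transitive M.E)
    (hr : Reflexive M.E) (hone : ∀ w : W, ∃! r : Fin 6, M.val w r) (w : W) :
    ¬ MSat M w (MForm.box sigmaM) := by
  intro hbox
  choose run hrun using fun u => (hone u).exists
  obtain ⟨u, hwu, hmax⟩ := ht.exists_forall_not_lt run (hr w)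
  obtain ⟨d, -, hd, u', huu', r, hdr, hr'⟩ := (MSat_sigmaM M u).1 (hbox u hwu)
  have hd_run : d = run u := (hone u).unique hd (hrun u)
  have hr_run : r = run u' := (hone u').unique hr' (hrun u')
  exact hmax u' huu' (hd_run ▸ hr_run ▸ hdr)
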